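/- arXiv:1904.12817 — 3 statements merged into one kernel-verified Lean document; each statement's English description precedes it below -/
import Mathlib

section
/- The opposite-colour merge and split operators satisfy the bialgebra law: as linear maps from ℂ²⊗ℂ² to ℂ²⊗ℂ², K_{H,0}†·K_{V,0} = √2·(K_{V,0}⊗K_{V,0})·(1⊗SWAP⊗1)·(K_{H,0}†⊗K_{H,0}†). -/
open Matrix Kronecker

noncomputable section

/-- The computational basis state `|0⟩` of a qubit. -/
def ket0 : Fin 2 → ℂ := fun i => if i = 0 then 1 else 0
/-- The computational basis state `|1⟩` of a qubit. -/
def ket1 : Fin 2 → ℂ := fun i => if i = 1 then 1 else 0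
/-- The state `|+⟩ = (|0⟩ + |1⟩)/√2`. -/
def ketP : Fin 2 → ℂ := (Real.sqrt 2 : ℂ)⁻¹ • (ket0 + ket1)
/-- The state `|−⟩ = (|0⟩ − |1⟩)/√2`. -/
def ketM : Fin 2 → ℂ := (Real.sqrt 2 : ℂ)⁻¹ • (ket0 - ket1)

/-- The outer product `|ψ⟩⟨φ|` as a 2×2 matrix. -/
def outer (ψ φ : Fin 2 → ℂ) : Matrix (Fin 2) (Fin 2) ℂ :=
  fun i j => ψ i * star (φ j)

/-- The outer product `|ψ⟩⟨φχ|` as a linear map `ℂ²⊗ℂ² → ℂ²` (a 2×4 matrix,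
with columns indexed by the Kronecker-product basis of `ℂ²⊗ℂ²`). -/
def outerM (ψ φ χ : Fin 2 → ℂ) : Matrix (Fin 2) (Fin 2 × Fin 2) ℂ :=
  fun i p => ψ i * star (φ p.1 * χ p.2)

/-- The bra `⟨ψ|` as a linear functional `ℂ² → ℂ` (a 1×2 matrix). -/
def braM (ψ : Fin 2 → ℂ) : Matrix (Fin 1) (Fin 2) ℂ := fun _ j => star (ψ j)

/-- `K_{H,0} = |0⟩⟨00| + |1⟩⟨11|`. -/
def KH0 : Matrix (Fin 2) (Fin 2 × Fin 2) ℂ := outerM ket0 ket0 ket0 + outerM ket1 ket1 ket1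
/-- `K_{H,1} = |0⟩⟨01| + |1⟩⟨10|`. -/
def KH1 : Matrix (Fin 2) (Fin 2 × Fin 2) ℂ := outerM ket0 ket0 ket1 + outerM ket1 ket1 ket0
/-- `K_{V,0} = |+⟩⟨++| + |−⟩⟨−−|`. -/
def KV0 : Matrix (Fin 2) (Fin 2 × Fin 2) ℂ := outerM ketP ketP ketP + outerM ketM ketM ketM
/-- `K_{V,1} = |+⟩⟨+−| + |−⟩⟨−+|`. -/
def KV1 : Matrix (Fin 2) (Fin 2 × Fin 2) ℂ := outerM ketP ketP ketM + outerM ketM ketM ketP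

/-- `A_{H,0} = ⟨0|`. -/
def AH0 : Matrix (Fin 1) (Fin 2) ℂ := braM ket0
/-- `A_{H,1} = ⟨1|`. -/
def AH1 : Matrix (Fin 1) (Fin 2) ℂ := braM ket1
/-- `A_{V,0} = ⟨+|`. -/
def AV0 : Matrix (Fin 1) (Fin 2) ℂ := braM ketP
/-- `A_{V,1} = ⟨−|`. -/
def AV1 : Matrix (Fin 1) (Fin 2) ℂ := braM ketM

/-- The Pauli `X` matrix `|0⟩⟨1| + |1⟩⟨0|`. -/
def PX : Matrix (Fin 2) (Fin 2) ℂ := outer ket0 ket1 + outer ket1 ket0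
/-- The Pauli `Z` matrix `|0⟩⟨0| − |1⟩⟨1|`. -/
def PZ : Matrix (Fin 2) (Fin 2) ℂ := outer ket0 ket0 - outer ket1 ket1

/-- The SWAP map on `ℂ²⊗ℂ²`, satisfying `SWAP(ψ⊗φ) = φ⊗ψ`. -/
def SWAP : Matrix (Fin 2 × Fin 2) (Fin 2 × Fin 2) ℂ :=
  fun p q => if q = (p.2, p.1) then 1 else 0

/-- The canonical regrouping `(ℂ²⊗(ℂ²⊗ℂ²))⊗ℂ² ≃ (ℂ²⊗ℂ²)⊗(ℂ²⊗ℂ²)` of index types,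
used to read `1⊗SWAP⊗1` as a map on `(ℂ²⊗ℂ²)⊗(ℂ²⊗ℂ²)`. -/
def regroup : ((Fin 2 × (Fin 2 × Fin 2)) × Fin 2) ≃ ((Fin 2 × Fin 2) × (Fin 2 × Fin 2)) where
  toFun p := ((p.1.1, p.1.2.1), (p.1.2.2, p.2))
  invFun p := ((p.1.1, (p.1.2, p.2.1)), p.2.2)
  left_inv _ := rfl
  right_inv _ := rfl

/-!
In the computational basis `K_{H,0}†` is the copy map `|i⟩ ↦ |ii⟩` and `√2·K_{V,0}` is the
parity map `|jk⟩ ↦ |j ⊕ k⟩`. Matrices sending basis vectors to basis vectors are closed under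
products, Kronecker products and reindexing, so both sides are `1/√2` times the matrix of a map of
basis labels, and both maps send `(c, d)` to `(c ⊕ d, c ⊕ d)`.
-/

namespace Matrix

variable {R ι κ μ ι' κ' : Type*} [DecidableEq ι] [DecidableEq ι']

def funMatrix [Zero R] [One R] (f : κ → ι) : Matrix ι κ R :=
  of fun i j => if i = f j then 1 else 0

@[simp]
theorem funMatrix_apply [Zero R] [One R] (f : κ → ι) (i : ι) (j : κ) :
    funMatrix (R := R) f i j = if i = f j then 1 else 0 := rfl

theorem funMatrix_id [Zero R] [One R] : funMatrix (R := R) (id : ι → ι) = 1 := by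
  ext i j
  simp [one_apply]

theorem funMatrix_mul_funMatrix [NonAssocSemiring R] [Fintype κ] [DecidableEq κ]
    (f : κ → ι) (g : μ → κ) :
    funMatrix (R := R) f * funMatrix (R := R) g = funMatrix (f ∘ g) := by
  ext i k
  simp [mul_apply]

theorem funMatrix_kronecker_funMatrix [MulZeroOneClass R] (f : κ → ι) (g : κ' → ι') :
    funMatrix (R := R) f ⊗ₖ funMatrix g = funMatrix (Prod.map f g) := by
  ext ⟨i, i'⟩ ⟨j, j'⟩
  simp only [kroneckerMap_apply, funMatrix_apply, Prod.map, Prod.ext_iff, ite_and, ite_mul,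
    one_mul, zero_mul]

theorem reindex_funMatrix [Zero R] [One R] (e₁ : ι ≃ ι') (e₂ : κ ≃ κ') (f : κ → ι) :
    reindex e₁ e₂ (funMatrix (R := R) f) = funMatrix (e₁ ∘ f ∘ e₂.symm) := by
  ext i j
  simp [Equiv.symm_apply_eq]

end Matrix

open Matrix

theorem SWAP_eq_funMatrix : SWAP = funMatrix Prod.swap := by
  ext p q
  simp [SWAP, Prod.ext_iff, and_comm, eq_comm]

theorem KH0_conjTranspose : KH0ᴴ = funMatrix fun i : Fin 2 => (i, i) := by
  ext ⟨j, k⟩ i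
  fin_cases i <;> fin_cases j <;> fin_cases k <;> simp [KH0, outerM, ket0, ket1]

theorem KV0_eq_smul_funMatrix :
    KV0 = (Real.sqrt 2 : ℂ)⁻¹ • funMatrix fun q : Fin 2 × Fin 2 => q.1 + q.2 := by
  have h : ((Real.sqrt 2 : ℂ)⁻¹) ^ 2 = 2⁻¹ := by
    rw [inv_pow, ← Complex.ofReal_pow, Real.sq_sqrt zero_le_two, Complex.ofReal_ofNat]
  ext i ⟨j, k⟩
  fin_cases i <;> fin_cases j <;> fin_cases k <;>
    simp [KV0, outerM, ketP, ketM, ket0, ket1] <;>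
    linear_combination (2 * (Real.sqrt 2 : ℂ)⁻¹) * h

/-- The opposite-colour merge and split operators satisfy the bialgebra law:
`K_{H,0}†·K_{V,0} = √2·(K_{V,0}⊗K_{V,0})·(1⊗SWAP⊗1)·(K_{H,0}†⊗K_{H,0}†)`. -/
theorem merge_split_bialgebra :
    KH0ᴴ * KV0
      = (Real.sqrt 2 : ℂ) •
        ((KV0 ⊗ₖ KV0)
          * Matrix.reindex regroup regroup
              (((1 : Matrix (Fin 2) (Fin 2) ℂ) ⊗ₖ SWAP) ⊗ₖ (1 : Matrix (Fin 2) (Fin 2) ℂ))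
          * (KH0ᴴ ⊗ₖ KH0ᴴ)) := by
  rw [KH0_conjTranspose, KV0_eq_smul_funMatrix, SWAP_eq_funMatrix, ← funMatrix_id]
  simp only [funMatrix_kronecker_funMatrix, reindex_funMatrix, smul_kronecker, kronecker_smul,
    Matrix.mul_smul, Matrix.smul_mul, funMatrix_mul_funMatrix, smul_smul]
  have hsqrt : (Real.sqrt 2 : ℂ) ≠ 0 := by exact_mod_cast (Real.sqrt_pos.2 two_pos).ne'
  have hscalar : (Real.sqrt 2 : ℂ) * ((Real.sqrt 2 : ℂ)⁻¹ * (Real.sqrt 2 : ℂ)⁻¹)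
      = (Real.sqrt 2 : ℂ)⁻¹ := by
    field_simp
  rw [hscalar]
  rfl
end
end

section
/- The merge-and-split realisation of CNOT is unitary in both heralded branches, up to a Pauli byproduct: for each s ∈ {0,1}, the map √2·(1⊗K_{V,s})·(K_{H,0}†⊗1) from ℂ²⊗ℂ² to ℂ²⊗ℂ² equals CNOT·(1⊗Z^s), where CNOT = |00⟩⟨00| + |01⟩⟨01| + |11⟩⟨10| + |10⟩⟨11|; in particular both branch maps are unitary and equal up to a Z correction on the second input. -/
open Matrix Kronecker

noncomputable section

/-- The vertical merge Kraus operators, indexed by the outcome bit `s`. -/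
def KV : Fin 2 → Matrix (Fin 2) (Fin 2 × Fin 2) ℂ := ![KV0, KV1]

/-- The tensor product `ψ⊗φ` of two qubit state vectors, as a vector of `ℂ²⊗ℂ²`. -/
def tensV (ψ φ : Fin 2 → ℂ) : Fin 2 × Fin 2 → ℂ := fun p => ψ p.1 * φ p.2

/-- The outer product `|v⟩⟨w|` of two vectors of `ℂ²⊗ℂ²`, as a 4×4 matrix. -/
def outer4 (v w : Fin 2 × Fin 2 → ℂ) : Matrix (Fin 2 × Fin 2) (Fin 2 × Fin 2) ℂ :=
  fun p q => v p * star (w q)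

/-- `CNOT = |00⟩⟨00| + |01⟩⟨01| + |11⟩⟨10| + |10⟩⟨11|`. -/
def CNOT : Matrix (Fin 2 × Fin 2) (Fin 2 × Fin 2) ℂ :=
  outer4 (tensV ket0 ket0) (tensV ket0 ket0) + outer4 (tensV ket0 ket1) (tensV ket0 ket1)
    + outer4 (tensV ket1 ket1) (tensV ket1 ket0) + outer4 (tensV ket1 ket0) (tensV ket1 ket1)

/-- The branch-`s` map `√2·(1⊗K_{V,s})·(K_{H,0}†⊗1) : ℂ²⊗ℂ² → ℂ²⊗ℂ²` of the
merge-and-split realisation of CNOT (with the middle three-qubit space reassociated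
along the canonical bijection `(ℂ²⊗ℂ²)⊗ℂ² ≃ ℂ²⊗(ℂ²⊗ℂ²)`). -/
def cnotBranch (s : Fin 2) : Matrix (Fin 2 × Fin 2) (Fin 2 × Fin 2) ℂ :=
  (Real.sqrt 2 : ℂ) •
    (((1 : Matrix (Fin 2) (Fin 2) ℂ) ⊗ₖ KV s)
      * Matrix.reindex (Equiv.prodAssoc (Fin 2) (Fin 2) (Fin 2)) (Equiv.refl (Fin 2 × Fin 2))
          (KH0ᴴ ⊗ₖ (1 : Matrix (Fin 2) (Fin 2) ℂ)))


lemma r_ne : (Real.sqrt 2 : ℂ) ≠ 0 := by norm_num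

lemma h1 : (Real.sqrt 2 : ℂ) * (Real.sqrt 2 : ℂ)⁻¹ = 1 := mul_inv_cancel₀ r_ne

lemma h2 : (Real.sqrt 2 : ℂ)⁻¹ * (Real.sqrt 2 : ℂ)⁻¹ = 2⁻¹ := by
  rw [← mul_inv]
  norm_cast
  rw [Real.mul_self_sqrt (by norm_num)]
  norm_num

set_option maxHeartbeats 4000000 in
lemma branch0 : cnotBranch 0 = CNOT := by
  ext ⟨i,j⟩ ⟨k,l⟩
  fin_cases i <;> fin_cases j <;> fin_cases k <;> fin_cases l <;>
  · simp only [cnotBranch, KV, CNOT, KH0, KV0, KV1, outerM, outer4, tensV,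
      ket0, ket1, ketP, ketM, Matrix.mul_apply, Matrix.reindex_apply, Matrix.submatrix_apply,
      Matrix.kroneckerMap_apply, Matrix.conjTranspose_apply, Fintype.sum_prod_type,
      Fin.sum_univ_two, Matrix.one_apply, Matrix.smul_apply, Matrix.add_apply,
      Pi.add_apply, Pi.sub_apply, Pi.smul_apply, Equiv.prodAssoc, Equiv.refl,
      Matrix.cons_val', Matrix.cons_val_zero, Matrix.empty_val', Matrix.cons_val_fin_one, Matrix.cons_val_one, Matrix.head_cons,
      smul_eq_mul]
    try simp only [outerM, outer, ketP, ketM, ket0, ket1, Pi.add_apply, Pi.sub_apply,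
      Pi.smul_apply, smul_eq_mul]
    norm_num [mul_add, ← mul_assoc, h1, h2]

set_option maxHeartbeats 4000000 in
lemma branch1 : cnotBranch 1 = CNOT * ((1 : Matrix (Fin 2) (Fin 2) ℂ) ⊗ₖ PZ) := by
  ext ⟨i,j⟩ ⟨k,l⟩
  fin_cases i <;> fin_cases j <;> fin_cases k <;> fin_cases l <;>
  · simp only [cnotBranch, KV, CNOT, KH0, KV0, KV1, PZ, outer, outerM, outer4, tensV,
      ket0, ket1, ketP, ketM, Matrix.mul_apply, Matrix.reindex_apply, Matrix.submatrix_apply,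
      Matrix.kroneckerMap_apply, Matrix.conjTranspose_apply, Fintype.sum_prod_type,
      Fin.sum_univ_two, Matrix.one_apply, Matrix.smul_apply, Matrix.add_apply,
      Matrix.sub_apply, Pi.add_apply, Pi.sub_apply, Pi.smul_apply, Equiv.prodAssoc, Equiv.refl,
      Matrix.cons_val', Matrix.cons_val_zero, Matrix.empty_val', Matrix.cons_val_fin_one, Matrix.cons_val_one, Matrix.head_cons,
      smul_eq_mul]
    try simp only [outerM, outer, ketP, ketM, ket0, ket1, Pi.add_apply, Pi.sub_apply,
      Pi.smul_apply, smul_eq_mul]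
    norm_num [mul_add, ← mul_assoc, h1, h2]

set_option maxHeartbeats 2000000 in
lemma cnot_unitary : CNOT * CNOTᴴ = 1 ∧ CNOTᴴ * CNOT = 1 := by
  constructor <;>
  · ext ⟨i,j⟩ ⟨k,l⟩
    fin_cases i <;> fin_cases j <;> fin_cases k <;> fin_cases l <;>
    · simp only [CNOT, outer4, tensV, ket0, ket1, Matrix.mul_apply,
        Matrix.conjTranspose_apply, Fintype.sum_prod_type, Fin.sum_univ_two,
        Matrix.one_apply, Matrix.add_apply]
      norm_num [Prod.ext_iff]

set_option maxHeartbeats 2000000 in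
lemma cz_unitary : (CNOT * ((1 : Matrix (Fin 2) (Fin 2) ℂ) ⊗ₖ PZ)) * (CNOT * ((1 : Matrix (Fin 2) (Fin 2) ℂ) ⊗ₖ PZ))ᴴ = 1 ∧ (CNOT * ((1 : Matrix (Fin 2) (Fin 2) ℂ) ⊗ₖ PZ))ᴴ * (CNOT * ((1 : Matrix (Fin 2) (Fin 2) ℂ) ⊗ₖ PZ)) = 1 := by
  constructor <;>
  · ext ⟨i,j⟩ ⟨k,l⟩
    fin_cases i <;> fin_cases j <;> fin_cases k <;> fin_cases l <;>
    · simp only [CNOT, PZ, outer, outer4, tensV, ket0, ket1, Matrix.mul_apply,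
        Matrix.conjTranspose_apply, Fintype.sum_prod_type, Fin.sum_univ_two,
        Matrix.one_apply, Matrix.add_apply, Matrix.sub_apply,
        Matrix.kroneckerMap_apply]
      norm_num [Prod.ext_iff]
/-- The merge-and-split realisation of CNOT is unitary in both heralded branches, up to a
Pauli byproduct: for each `s ∈ {0,1}`, `√2·(1⊗K_{V,s})·(K_{H,0}†⊗1) = CNOT·(1⊗Z^s)`;
in particular both branch maps are unitary and equal up to a `Z` correction on the
second input. -/
theorem merge_split_cnot :
    (∀ s : Fin 2,
      cnotBranch s = CNOT * ((1 : Matrix (Fin 2) (Fin 2) ℂ) ⊗ₖ PZ ^ (s : ℕ)) ∧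
      cnotBranch s * (cnotBranch s)ᴴ = 1 ∧
      (cnotBranch s)ᴴ * cnotBranch s = 1) ∧
    cnotBranch 1 = cnotBranch 0 * ((1 : Matrix (Fin 2) (Fin 2) ℂ) ⊗ₖ PZ) := by
  constructor
  · intro s
    fin_cases s
    · simp only [Fin.mk_zero, Fin.isValue, Fin.val_zero, pow_zero]
      refine ⟨?_, by rw [branch0]; exact cnot_unitary.1, by rw [branch0]; exact cnot_unitary.2⟩
      simp [branch0, Matrix.one_kronecker_one]
    · simp only [Fin.mk_one, Fin.isValue, Fin.val_one, pow_one]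
      exact ⟨branch1, by rw [branch1]; exact cz_unitary.1, by rw [branch1]; exact cz_unitary.2⟩
  · rw [branch0, branch1]
end
end

section
/- Measuring the output of a merge is equivalent to correlated measurements of both inputs: for all s,r ∈ {0,1}, A_{H,s}·K_{H,r} = A_{H,s}⊗A_{H,s⊕r} and A_{V,s}·K_{V,r} = A_{V,s}⊗A_{V,s⊕r}, where ⊕ is addition mod 2. -/
open Matrix Kronecker

noncomputable section

/-- The horizontal and vertical merge Kraus operators, indexed by the outcome bit. -/
def KH : Fin 2 → Matrix (Fin 2) (Fin 2 × Fin 2) ℂ := ![KH0, KH1]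
/-- The bra `⟨ψ|` as a row vector (a linear functional on `ℂ²`). -/
def braF (ψ : Fin 2 → ℂ) : Fin 2 → ℂ := fun j => star (ψ j)

/-- The annihilator functionals `A_{H,s}` and `A_{V,s}`, as row vectors. -/
def AHf : Fin 2 → (Fin 2 → ℂ) := ![braF ket0, braF ket1]
def AVf : Fin 2 → (Fin 2 → ℂ) := ![braF ketP, braF ketM]

/-- The tensor product of two linear functionals on `ℂ²`, as the induced functional
on `ℂ²⊗ℂ²` (a row vector). -/
def tensF (f g : Fin 2 → ℂ) : Fin 2 × Fin 2 → ℂ := fun p => f p.1 * g p.2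

/-! In an orthonormal basis `b`, the merge operator `K_r = ∑ₜ |bₜ⟩⟨bₜ, bₜ₊ᵣ|` is hit by `⟨bₛ|` only
in its term `t = s`, which leaves `⟨bₛ| ⊗ ⟨bₛ₊ᵣ|`. The horizontal merge has this shape in the
computational basis, the vertical one in the basis `|±⟩`. -/

def zBasis : Fin 2 → Fin 2 → ℂ := ![ket0, ket1]
def xBasis : Fin 2 → Fin 2 → ℂ := ![ketP, ketM]

def mergeKraus (b : Fin 2 → Fin 2 → ℂ) (r : Fin 2) : Matrix (Fin 2) (Fin 2 × Fin 2) ℂ :=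
  ∑ t, outerM (b t) (b t) (b (t + r))

lemma vecMul_braF_outerM (v ψ φ χ : Fin 2 → ℂ) :
    vecMul (braF v) (outerM ψ φ χ) = (star v ⬝ᵥ ψ) • tensF (braF φ) (braF χ) := by
  funext p
  simp only [vecMul, dotProduct, outerM, braF, tensF, Pi.smul_apply, Pi.star_apply, smul_eq_mul,
    Finset.sum_mul, star_mul']
  exact Finset.sum_congr rfl fun _ _ => by ring

lemma vecMul_braF_mergeKraus {b : Fin 2 → Fin 2 → ℂ}
    (hb : ∀ s t, star (b s) ⬝ᵥ b t = if s = t then 1 else 0) (s r : Fin 2) :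
    vecMul (braF (b s)) (mergeKraus b r) = tensF (braF (b s)) (braF (b (s + r))) := by
  simp only [mergeKraus, vecMul_sum, vecMul_braF_outerM, hb, ite_smul, one_smul, zero_smul,
    Finset.sum_ite_eq, Finset.mem_univ, if_true]

lemma zBasis_orthonormal (s t : Fin 2) :
    star (zBasis s) ⬝ᵥ zBasis t = if s = t then 1 else 0 := by
  fin_cases s <;> fin_cases t <;> simp [zBasis, ket0, ket1, dotProduct]

lemma xBasis_orthonormal (s t : Fin 2) :
    star (xBasis s) ⬝ᵥ xBasis t = if s = t then 1 else 0 := by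
  have h : (Real.sqrt 2 : ℂ)⁻¹ * (Real.sqrt 2 : ℂ)⁻¹ = 2⁻¹ := by
    rw [← mul_inv, ← Complex.ofReal_mul, Real.mul_self_sqrt zero_le_two]
    norm_num
  fin_cases s <;> fin_cases t <;> norm_num [xBasis, ketP, ketM, ket0, ket1, dotProduct, h]

lemma KH_eq_mergeKraus : KH = mergeKraus zBasis := by
  funext r
  fin_cases r <;> simp [KH, KH0, KH1, mergeKraus, zBasis]

lemma KV_eq_mergeKraus : KV = mergeKraus xBasis := by
  funext r
  fin_cases r <;> simp [KV, KV0, KV1, mergeKraus, xBasis]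

lemma AHf_eq_braF_zBasis : AHf = fun s => braF (zBasis s) := by
  funext s
  fin_cases s <;> rfl

lemma AVf_eq_braF_xBasis : AVf = fun s => braF (xBasis s) := by
  funext s
  fin_cases s <;> rfl

/-- Measuring the output of a merge is equivalent to correlated measurements of both
inputs: for all `s,r ∈ {0,1}`, `A_{H,s}·K_{H,r} = A_{H,s}⊗A_{H,s⊕r}` and
`A_{V,s}·K_{V,r} = A_{V,s}⊗A_{V,s⊕r}`, where `⊕` is addition mod 2. -/
theorem measure_after_merge :
    ∀ s r : Fin 2,
      Matrix.vecMul (AHf s) (KH r) = tensF (AHf s) (AHf (s + r)) ∧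
      Matrix.vecMul (AVf s) (KV r) = tensF (AVf s) (AVf (s + r)) := by
  intro s r
  simp only [AHf_eq_braF_zBasis, AVf_eq_braF_xBasis, KH_eq_mergeKraus, KV_eq_mergeKraus]
  exact ⟨vecMul_braF_mergeKraus zBasis_orthonormal s r,
    vecMul_braF_mergeKraus xBasis_orthonormal s r⟩
end
end
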